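/- Utility-invariance of the optimal support (main structural consequence): assume every event has strict overround, ∑_i π ℓ i > 1 for each ℓ, and that within each event the edge ratios are pairwise distinct (i ≠ j implies p ℓ i / π ℓ i ≠ p ℓ j / π ℓ j). Let U and V both be admissible utilities with derivatives U' and V' respectively. Suppose (c, g) is a feasible portfolio with c > 0 maximizing ∑_x Pr(x)·U(W(x)) over all feasible portfolios, and (c', g') is a feasible portfolio with c' > 0 maximizing ∑_x Pr(x)·V(W'(x)) over all feasible portfolios. Then the active supports coincide: for every event ℓ and every outcome i, g ℓ i > 0 if and only if g' ℓ i > 0. -/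

import Mathlib

open Finset

/-- Probability of a product state `x`. -/
def prodProb {m : ℕ} {n : Fin m → ℕ} (p : ∀ ℓ, Fin (n ℓ) → ℝ)
    (x : ∀ ℓ, Fin (n ℓ)) : ℝ :=
  ∏ ℓ, p ℓ (x ℓ)

/-- Terminal wealth of the portfolio `(c, g)` in product state `x`. -/
def wealth {m : ℕ} {n : Fin m → ℕ} (c : ℝ) (g : ∀ ℓ, Fin (n ℓ) → ℝ)
    (x : ∀ ℓ, Fin (n ℓ)) : ℝ :=
  c + ∑ ℓ, g ℓ (x ℓ)

/-- Probability of a reduced state `y` (a state of all events other than `ℓ`). -/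
def redProb {m : ℕ} {n : Fin m → ℕ} (p : ∀ ℓ, Fin (n ℓ) → ℝ) (ℓ : Fin m)
    (y : ∀ r : {r : Fin m // r ≠ ℓ}, Fin (n r.1)) : ℝ :=
  ∏ r, p r.1 (y r)

/-- Background wealth `R_ℓ(y)` from all events other than `ℓ`. -/
def background {m : ℕ} {n : Fin m → ℕ} (c : ℝ) (g : ∀ ℓ, Fin (n ℓ) → ℝ) (ℓ : Fin m)
    (y : ∀ r : {r : Fin m // r ≠ ℓ}, Fin (n r.1)) : ℝ :=
  c + ∑ r, g r.1 (y r)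

/-- Reduced expectation `E₋ℓ[h]` over reduced states of event `ℓ`. -/
def Eminus {m : ℕ} {n : Fin m → ℕ} (p : ∀ ℓ, Fin (n ℓ) → ℝ) (ℓ : Fin m)
    (h : (∀ r : {r : Fin m // r ≠ ℓ}, Fin (n r.1)) → ℝ) : ℝ :=
  ∑ y, redProb p ℓ y * h y

/-- Feasibility: nonnegative cash and wagers, unit budget, positive wealth in every state. -/
def Feasible {m : ℕ} {n : Fin m → ℕ} (π : ∀ ℓ, Fin (n ℓ) → ℝ)
    (c : ℝ) (g : ∀ ℓ, Fin (n ℓ) → ℝ) : Prop :=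
  0 ≤ c ∧ (∀ ℓ i, 0 ≤ g ℓ i) ∧ (c + ∑ ℓ, ∑ i, π ℓ i * g ℓ i = 1) ∧
    ∀ x, 0 < wealth c g x

/-- The wagers `g` are supported on the support family `A`. -/
def SupportedOn {m : ℕ} {n : Fin m → ℕ} (A : ∀ ℓ, Finset (Fin (n ℓ)))
    (g : ∀ ℓ, Fin (n ℓ) → ℝ) : Prop :=
  ∀ ℓ i, (i ∈ A ℓ → 0 < g ℓ i) ∧ (i ∉ A ℓ → g ℓ i = 0)

/-- `U` is an admissible utility with derivative `U'`. -/
def Admissible (U U' : ℝ → ℝ) : Prop :=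
  (∀ w : ℝ, 0 < w → HasDerivAt U (U' w) w) ∧ (∀ w : ℝ, 0 < w → 0 < U' w) ∧
    StrictAntiOn U' (Set.Ioi 0)

/-!
Shifting a little cash from an optimum into a single wager `(ℓ, i)` is budget-neutral and, since
`c > 0`, feasible; shifting back is feasible when `g ℓ i > 0`. The first-order conditions read
`p i * H (g i) ≤ π i * λ`, with equality on the support `A`, where `λ` is the expected marginal
utility and `H a` the expected marginal utility given that event `ℓ` pays `a`. Summing them over
the outcomes of `ℓ` gives `λ * (1 - π(A)) = (1 - p(A)) * H 0`, so `A` is exactly the set of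
outcomes whose edge ratio `p i / π i` exceeds `(1 - p(A)) / (1 - π(A))`. A set with this
self-consistency property is unique: of two such sets the one with the smaller threshold contains
the other, and the outcomes it adds have ratios below the larger threshold, which forces the two
thresholds, hence the two sets, to agree. None of this depends on the utility.
-/

open Filter Topology

lemma tendsto_add_mul_nhds_zero (a b : ℝ) :
    Tendsto (fun t : ℝ => a + t * b) (𝓝 0) (𝓝 a) := by
  simpa using ((tendsto_id (x := 𝓝 (0 : ℝ))).mul_const b).const_add a

lemma IsLocalMaxOn.hasDerivAt_nonpos {f : ℝ → ℝ} {f' a : ℝ} (h : IsLocalMaxOn f (Set.Ici a) a)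
    (hf : HasDerivAt f f' a) : f' ≤ 0 := by
  have hright : ∀ᶠ x in 𝓝[>] a, x ∈ Set.Ici a :=
    eventually_nhdsWithin_of_forall fun _ hx => Set.mem_Ici.2 (Set.mem_Ioi.1 hx).le
  have hone : (1 : ℝ) ∈ posTangentConeAt (Set.Ici a) a :=
    one_mem_posTangentConeAt_iff_frequently.2 hright.frequently
  simpa using h.hasFDerivWithinAt_nonpos hf.hasFDerivAt.hasFDerivWithinAt hone

lemma hasDerivAt_sum_mul_comp_add_mul {α : Type*} [Fintype α] {U U' : ℝ → ℝ}
    (w W e : α → ℝ) (hU : ∀ x, HasDerivAt U (U' (W x)) (W x)) :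
    HasDerivAt (fun t => ∑ x, w x * U (W x + t * e x)) (∑ x, w x * (U' (W x) * e x)) 0 := by
  refine HasDerivAt.fun_sum fun x _ => HasDerivAt.const_mul _ ?_
  have hline : HasDerivAt (fun t : ℝ => W x + t * e x) (e x) 0 := by
    simpa using ((hasDerivAt_id (0 : ℝ)).mul_const (e x)).const_add (W x)
  exact (hU x).comp_of_eq 0 hline (by simp)

section ThresholdSupport

variable {ι : Type*} [DecidableEq ι] (p π : ι → ℝ)

noncomputable def supportThreshold (A : Finset ι) : ℝ :=
  (1 - ∑ j ∈ A, p j) / (1 - ∑ j ∈ A, π j)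

def IsThresholdSupport (A : Finset ι) : Prop :=
  ∑ i ∈ A, π i < 1 ∧ ∀ i, i ∈ A ↔ supportThreshold p π A < p i / π i

variable {p π}

lemma supportThreshold_le_of_subset {A B : Finset ι} (hπ : ∀ i, 0 < π i)
    (hA : ∑ i ∈ A, π i < 1) (hB : ∑ i ∈ B, π i < 1) (hBA : B ⊆ A)
    (hle : ∀ j ∈ A \ B, p j / π j ≤ supportThreshold p π B) :
    supportThreshold p π B ≤ supportThreshold p π A := by
  set θ := supportThreshold p π B
  have hθ : 1 - ∑ j ∈ B, p j = θ * (1 - ∑ j ∈ B, π j) :=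
    (div_mul_cancel₀ _ (sub_pos.2 hB).ne').symm
  have hdiff : ∑ j ∈ A \ B, p j ≤ θ * ∑ j ∈ A \ B, π j := by
    rw [mul_sum]
    exact sum_le_sum fun j hj => (div_le_iff₀ (hπ j)).1 (hle j hj)
  rw [sum_sdiff_eq_sub hBA, sum_sdiff_eq_sub hBA] at hdiff
  rw [supportThreshold, le_div_iff₀ (sub_pos.2 hA)]
  linarith

lemma IsThresholdSupport.unique {A B : Finset ι} (hπ : ∀ i, 0 < π i)
    (hA : IsThresholdSupport p π A) (hB : IsThresholdSupport p π B) : A = B := by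
  wlog hθ : supportThreshold p π A ≤ supportThreshold p π B generalizing A B
  · exact (this hB hA (le_of_not_ge hθ)).symm
  have hBA : B ⊆ A := fun i hi => (hA.2 i).2 (hθ.trans_lt ((hB.2 i).1 hi))
  have hle : ∀ j ∈ A \ B, p j / π j ≤ supportThreshold p π B := fun j hj =>
    not_lt.1 fun h => (mem_sdiff.1 hj).2 ((hB.2 j).2 h)
  have hθ_eq := hθ.antisymm (supportThreshold_le_of_subset hπ hA.1 hB.1 hBA hle)
  ext i
  rw [hA.2, hB.2, hθ_eq]

lemma isThresholdSupport_of_kkt [Fintype ι] (hp : ∀ i, 0 < p i) (hpsum : ∑ i, p i = 1)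
    (hπ : ∀ i, 0 < π i) (hover : 1 < ∑ i, π i) {g : ι → ℝ} {H : ℝ → ℝ} {κ : ℝ}
    (hg : ∀ i, 0 ≤ g i) (hH₀ : 0 < H 0) (hH : ∀ a, 0 < a → H a < H 0) (hκ : 0 < κ)
    (hκ_eq : κ = ∑ i, p i * H (g i)) (hle : ∀ i, p i * H (g i) ≤ π i * κ)
    (heq : ∀ i, 0 < g i → p i * H (g i) = π i * κ) :
    IsThresholdSupport p π {i | 0 < g i} := by
  set A : Finset ι := {i | 0 < g i}
  have hmem : ∀ i, i ∈ A ↔ 0 < g i := by simp [A]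
  have hout : ∀ i ∉ A, g i = 0 := fun i hi =>
    le_antisymm (not_lt.1 ((hmem i).not.1 hi)) (hg i)
  have hPc : ∑ i ∈ Aᶜ, p i = 1 - ∑ i ∈ A, p i := by
    rw [← hpsum, ← sum_add_sum_compl A p]; ring
  have hkey : κ * (1 - ∑ i ∈ A, π i) = (1 - ∑ i ∈ A, p i) * H 0 := by
    have hin : ∑ i ∈ A, p i * H (g i) = (∑ i ∈ A, π i) * κ := by
      rw [sum_mul]; exact sum_congr rfl fun i hi => heq i ((hmem i).1 hi)
    have hcompl : ∑ i ∈ Aᶜ, p i * H (g i) = (1 - ∑ i ∈ A, p i) * H 0 := by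
      rw [← hPc, sum_mul]
      exact sum_congr rfl fun i hi => by rw [hout i (mem_compl.1 hi)]
    have := sum_add_sum_compl A fun i => p i * H (g i)
    rw [hin, hcompl, ← hκ_eq] at this
    linarith
  have hQ : ∑ i ∈ A, π i < 1 := by
    rcases Aᶜ.eq_empty_or_nonempty with hA | ⟨j, hj⟩
    · rw [compl_eq_empty_iff] at hA
      have hneg : κ * (1 - ∑ i ∈ A, π i) < 0 :=
        mul_neg_of_pos_of_neg hκ (by rw [hA]; linarith)
      rw [hkey, hA, hpsum, sub_self, zero_mul] at hneg
      exact absurd hneg (lt_irrefl 0)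
    · have hP : 0 < 1 - ∑ i ∈ A, p i :=
        hPc ▸ sum_pos' (fun i _ => (hp i).le) ⟨j, hj, hp j⟩
      have := hkey ▸ mul_pos hP hH₀
      linarith [pos_of_mul_pos_right this hκ.le]
  have hθ : supportThreshold p π A = κ / H 0 :=
    (div_eq_div_iff (sub_pos.2 hQ).ne' hH₀.ne').2 (by linarith)
  refine ⟨hQ, fun i => ?_⟩
  rw [hθ, div_lt_div_iff₀ hH₀ (hπ i), hmem]
  constructor
  · intro hgi
    nlinarith [heq i hgi, mul_lt_mul_of_pos_left (hH _ hgi) (hp i)]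
  · intro hlt
    by_contra hgi
    have := hle i
    rw [hout i ((hmem i).not.2 hgi)] at this
    linarith

end ThresholdSupport

section Portfolio

variable {m : ℕ} {n : Fin m → ℕ}

def expectedUtility (p : ∀ ℓ, Fin (n ℓ) → ℝ) (U : ℝ → ℝ) (c : ℝ)
    (g : ∀ ℓ, Fin (n ℓ) → ℝ) : ℝ :=
  ∑ x, prodProb p x * U (wealth c g x)

noncomputable def expectedMarginalUtility (p : ∀ ℓ, Fin (n ℓ) → ℝ) (U' : ℝ → ℝ) (c : ℝ)
    (g : ∀ ℓ, Fin (n ℓ) → ℝ) : ℝ :=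
  ∑ x, prodProb p x * U' (wealth c g x)

noncomputable def backgroundMarginalUtility (p : ∀ ℓ, Fin (n ℓ) → ℝ) (U' : ℝ → ℝ) (c : ℝ)
    (g : ∀ ℓ, Fin (n ℓ) → ℝ) (ℓ : Fin m) (a : ℝ) : ℝ :=
  Eminus p ℓ fun y => U' (background c g ℓ y + a)

def unitBet (ℓ : Fin m) (i : Fin (n ℓ)) : ∀ r, Fin (n r) → ℝ :=
  Pi.single ℓ (Pi.single i 1)

lemma prodProb_piSplitAt_symm (p : ∀ ℓ, Fin (n ℓ) → ℝ) (ℓ : Fin m) (j : Fin (n ℓ))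
    (y : ∀ r : {r : Fin m // r ≠ ℓ}, Fin (n r.1)) :
    prodProb p ((Equiv.piSplitAt ℓ _).symm (j, y)) = p ℓ j * redProb p ℓ y := by
  rw [prodProb, Fintype.prod_eq_mul_prod_subtype_ne _ ℓ]
  simp only [Equiv.piSplitAt_symm_apply, dite_true, redProb]
  congr 1
  exact prod_congr rfl fun r _ => by rw [dif_neg r.2]

lemma wealth_piSplitAt_symm (c : ℝ) (g : ∀ ℓ, Fin (n ℓ) → ℝ) (ℓ : Fin m) (j : Fin (n ℓ))
    (y : ∀ r : {r : Fin m // r ≠ ℓ}, Fin (n r.1)) :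
    wealth c g ((Equiv.piSplitAt ℓ _).symm (j, y)) = background c g ℓ y + g ℓ j := by
  rw [wealth, Fintype.sum_eq_add_sum_subtype_ne _ ℓ]
  simp only [Equiv.piSplitAt_symm_apply, dite_true, background]
  rw [add_left_comm, add_comm]
  congr 2
  exact sum_congr rfl fun r _ => by rw [dif_neg r.2]

lemma sum_prodProb_mul_eq_sum_Eminus (p : ∀ ℓ, Fin (n ℓ) → ℝ) (c : ℝ)
    (g : ∀ ℓ, Fin (n ℓ) → ℝ) (ℓ : Fin m) (φ : Fin (n ℓ) → ℝ → ℝ) :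
    ∑ x, prodProb p x * φ (x ℓ) (wealth c g x) =
      ∑ j, p ℓ j * Eminus p ℓ (fun y => φ j (background c g ℓ y + g ℓ j)) := by
  rw [← (Equiv.piSplitAt ℓ _).symm.sum_comp, Fintype.sum_prod_type]
  refine sum_congr rfl fun j _ => ?_
  simp [prodProb_piSplitAt_symm, wealth_piSplitAt_symm, Eminus, mul_sum, mul_assoc]

lemma Eminus_mul_const (p : ∀ ℓ, Fin (n ℓ) → ℝ) (ℓ : Fin m)
    (h : (∀ r : {r : Fin m // r ≠ ℓ}, Fin (n r.1)) → ℝ) (k : ℝ) :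
    Eminus p ℓ (fun y => h y * k) = Eminus p ℓ h * k := by
  simp only [Eminus, sum_mul, mul_assoc]

lemma expectedMarginalUtility_eq_sum (p : ∀ ℓ, Fin (n ℓ) → ℝ) (U' : ℝ → ℝ) (c : ℝ)
    (g : ∀ ℓ, Fin (n ℓ) → ℝ) (ℓ : Fin m) :
    expectedMarginalUtility p U' c g = ∑ j, p ℓ j * backgroundMarginalUtility p U' c g ℓ (g ℓ j) :=
  sum_prodProb_mul_eq_sum_Eminus p c g ℓ fun _ w => U' w

lemma wealth_add_smul (c c' t : ℝ) (g g' : ∀ ℓ, Fin (n ℓ) → ℝ) (x : ∀ ℓ, Fin (n ℓ)) :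
    wealth (c + t * c') (g + t • g') x = wealth c g x + t * wealth c' g' x := by
  simp only [wealth, Pi.add_apply, Pi.smul_apply, smul_eq_mul, sum_add_distrib, mul_add,
    mul_sum]
  ring

lemma wealth_unitBet (k : ℝ) (ℓ : Fin m) (i : Fin (n ℓ)) (x : ∀ ℓ, Fin (n ℓ)) :
    wealth k (unitBet ℓ i) x = k + (Pi.single i 1 : Fin (n ℓ) → ℝ) (x ℓ) := by
  rw [wealth, Fintype.sum_eq_single ℓ fun r hr => by simp [unitBet, hr]]
  simp [unitBet]

lemma cost_unitBet (π : ∀ ℓ, Fin (n ℓ) → ℝ) (ℓ : Fin m) (i : Fin (n ℓ)) :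
    ∑ r, ∑ j, π r j * unitBet ℓ i r j = π ℓ i := by
  rw [Fintype.sum_eq_single ℓ fun r hr => by simp [unitBet, hr]]
  simp [unitBet, Pi.single_apply]

variable {p π : ∀ ℓ, Fin (n ℓ) → ℝ} {U U' : ℝ → ℝ} {c : ℝ} {g : ∀ ℓ, Fin (n ℓ) → ℝ}

lemma background_pos (hc : 0 < c) (hg : ∀ ℓ i, 0 ≤ g ℓ i)
    (ℓ : Fin m) (y : ∀ r : {r : Fin m // r ≠ ℓ}, Fin (n r.1)) : 0 < background c g ℓ y :=
  add_pos_of_pos_of_nonneg hc (sum_nonneg fun r _ => hg r.1 (y r))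

lemma add_smul_unitBet_nonneg (hg : ∀ ℓ i, 0 ≤ g ℓ i) {ℓ : Fin m}
    {i : Fin (n ℓ)} {t : ℝ} (ht : 0 ≤ g ℓ i + t) (r : Fin m) (j : Fin (n r)) :
    0 ≤ (g + t • unitBet ℓ i) r j := by
  by_cases hr : r = ℓ
  · subst hr
    by_cases hj : j = i
    · subst hj; simpa [unitBet] using ht
    · simpa [unitBet, hj] using hg r j
  · simpa [unitBet, hr] using hg r j

lemma Feasible.eventually_add_smul {c' : ℝ} {g' : ∀ ℓ, Fin (n ℓ) → ℝ} (h : Feasible π c g)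
    (hcost : c' + ∑ ℓ, ∑ i, π ℓ i * g' ℓ i = 0) :
    ∀ᶠ t in 𝓝 (0 : ℝ), 0 ≤ c + t * c' → (∀ ℓ i, 0 ≤ (g + t • g') ℓ i) →
      Feasible π (c + t * c') (g + t • g') := by
  obtain ⟨-, -, hbudget, hW⟩ := h
  have hW' : ∀ᶠ t in 𝓝 (0 : ℝ), ∀ x, 0 < wealth (c + t * c') (g + t • g') x :=
    eventually_all.2 fun x => by
      simpa only [wealth_add_smul] using
        (tendsto_add_mul_nhds_zero _ (wealth c' g' x)).eventually_const_lt (hW x)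
  filter_upwards [hW'] with t hWt hct hgt
  refine ⟨hct, hgt, ?_, hWt⟩
  simp only [Pi.add_apply, Pi.smul_apply, smul_eq_mul, mul_add, sum_add_distrib]
  simp only [mul_left_comm _ t, ← mul_sum]
  linear_combination hbudget + t * hcost

lemma sum_prodProb_mul_marginal_mul_wealth_unitBet (ℓ : Fin m) (i : Fin (n ℓ)) :
    ∑ x, prodProb p x * (U' (wealth c g x) * wealth (-π ℓ i) (unitBet ℓ i) x) =
      p ℓ i * backgroundMarginalUtility p U' c g ℓ (g ℓ i) -
        π ℓ i * expectedMarginalUtility p U' c g := by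
  simp only [wealth_unitBet]
  rw [sum_prodProb_mul_eq_sum_Eminus p c g ℓ fun j w =>
      U' w * (-π ℓ i + (Pi.single i 1 : Fin (n ℓ) → ℝ) j),
    expectedMarginalUtility_eq_sum p U' c g ℓ]
  set H := backgroundMarginalUtility p U' c g ℓ
  calc _ = ∑ j, ((Pi.single i 1 : Fin (n ℓ) → ℝ) j * (p ℓ j * H (g ℓ j)) -
        π ℓ i * (p ℓ j * H (g ℓ j))) :=
      sum_congr rfl fun j _ => by
        rw [Eminus_mul_const]; simp only [H, backgroundMarginalUtility]; ring
    _ = _ := by simp [sum_sub_distrib, mul_sum, Pi.single_apply]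

lemma kkt_of_optimal (hU : Admissible U U') (hfeas : Feasible π c g) (hc : 0 < c)
    (hopt : ∀ c₁ g₁, Feasible π c₁ g₁ → expectedUtility p U c₁ g₁ ≤ expectedUtility p U c g)
    (ℓ : Fin m) (i : Fin (n ℓ)) :
    p ℓ i * backgroundMarginalUtility p U' c g ℓ (g ℓ i) ≤
        π ℓ i * expectedMarginalUtility p U' c g ∧
      (0 < g ℓ i → p ℓ i * backgroundMarginalUtility p U' c g ℓ (g ℓ i) =
        π ℓ i * expectedMarginalUtility p U' c g) := by
  set ψ : ℝ → ℝ := fun t =>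
    ∑ x, prodProb p x * U (wealth c g x + t * wealth (-π ℓ i) (unitBet ℓ i) x)
  have hψ : HasDerivAt ψ (p ℓ i * backgroundMarginalUtility p U' c g ℓ (g ℓ i) -
      π ℓ i * expectedMarginalUtility p U' c g) 0 := by
    rw [← sum_prodProb_mul_marginal_mul_wealth_unitBet]
    exact hasDerivAt_sum_mul_comp_add_mul _ _ _ fun x => hU.1 _ (hfeas.2.2.2 x)
  have hmax : ∀ᶠ t in 𝓝 0, 0 ≤ g ℓ i + t → ψ t ≤ ψ 0 := by
    have hcost : -π ℓ i + ∑ r, ∑ j, π r j * unitBet ℓ i r j = 0 := by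
      rw [cost_unitBet]; ring
    filter_upwards [hfeas.eventually_add_smul hcost,
      (tendsto_add_mul_nhds_zero c (-π ℓ i)).eventually_const_le hc] with t hfeas_t hct hgt
    simpa only [ψ, expectedUtility, wealth_add_smul, zero_mul, add_zero] using
      hopt _ _ (hfeas_t hct (add_smul_unitBet_nonneg hfeas.2.1 hgt))
  constructor
  · have hmaxOn : IsLocalMaxOn ψ (Set.Ici 0) 0 := by
      filter_upwards [nhdsWithin_le_nhds hmax, self_mem_nhdsWithin] with t h ht
      exact h (add_nonneg (hfeas.2.1 ℓ i) ht)
    linarith [hmaxOn.hasDerivAt_nonpos hψ]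
  · intro hgi
    have hmax' : IsLocalMax ψ 0 := by
      filter_upwards [hmax, eventually_gt_nhds (neg_lt_zero.2 hgi)] with t h ht
      exact h (by linarith)
    linarith [hmax'.hasDerivAt_eq_zero hψ]

section Marginal

variable [∀ ℓ, Nonempty (Fin (n ℓ))]

lemma backgroundMarginalUtility_pos (hp : ∀ ℓ i, 0 < p ℓ i) (hU : Admissible U U')
    (hc : 0 < c) (hg : ∀ ℓ i, 0 ≤ g ℓ i) (ℓ : Fin m) {a : ℝ} (ha : 0 ≤ a) :
    0 < backgroundMarginalUtility p U' c g ℓ a :=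
  sum_pos (fun y _ => mul_pos (prod_pos fun r _ => hp r.1 (y r))
    (hU.2.1 _ (by linarith [background_pos hc hg ℓ y]))) univ_nonempty

lemma backgroundMarginalUtility_strictAntiOn (hp : ∀ ℓ i, 0 < p ℓ i) (hU : Admissible U U')
    (hc : 0 < c) (hg : ∀ ℓ i, 0 ≤ g ℓ i) (ℓ : Fin m) :
    StrictAntiOn (backgroundMarginalUtility p U' c g ℓ) (Set.Ici 0) := by
  intro a ha b hb hab
  refine sum_lt_sum_of_nonempty univ_nonempty fun y _ => ?_
  have hR := background_pos hc hg ℓ y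
  have ha' : (0 : ℝ) ≤ a := ha
  exact mul_lt_mul_of_pos_left
    (hU.2.2 (Set.mem_Ioi.2 (by linarith)) (Set.mem_Ioi.2 (by linarith)) (by linarith))
    (prod_pos fun r _ => hp r.1 (y r))

lemma expectedMarginalUtility_pos (hp : ∀ ℓ i, 0 < p ℓ i) (hU : Admissible U U')
    (hW : ∀ x, 0 < wealth c g x) : 0 < expectedMarginalUtility p U' c g :=
  sum_pos (fun x _ => mul_pos (prod_pos fun r _ => hp r (x r)) (hU.2.1 _ (hW x))) univ_nonempty

end Marginal

lemma isThresholdSupport_of_optimal (hp : ∀ ℓ i, 0 < p ℓ i) (hpsum : ∀ ℓ, ∑ i, p ℓ i = 1)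
    (hπ : ∀ ℓ i, 0 < π ℓ i) (hover : ∀ ℓ, 1 < ∑ i, π ℓ i) (hU : Admissible U U')
    (hfeas : Feasible π c g) (hc : 0 < c)
    (hopt : ∀ c₁ g₁, Feasible π c₁ g₁ → expectedUtility p U c₁ g₁ ≤ expectedUtility p U c g)
    (ℓ : Fin m) : IsThresholdSupport (p ℓ) (π ℓ) {i | 0 < g ℓ i} := by
  have : ∀ r, Nonempty (Fin (n r)) := fun r =>
    univ_nonempty_iff.1 (nonempty_of_sum_ne_zero (by rw [hpsum r]; exact one_ne_zero))
  have hkkt := kkt_of_optimal hU hfeas hc hopt ℓ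
  exact isThresholdSupport_of_kkt (hp ℓ) (hpsum ℓ) (hπ ℓ) (hover ℓ) (hfeas.2.1 ℓ)
    (backgroundMarginalUtility_pos hp hU hc hfeas.2.1 ℓ le_rfl)
    (fun _ ha => backgroundMarginalUtility_strictAntiOn hp hU hc hfeas.2.1 ℓ Set.self_mem_Ici
      ha.le ha)
    (expectedMarginalUtility_pos hp hU hfeas.2.2.2) (expectedMarginalUtility_eq_sum p U' c g ℓ)
    (fun i => (hkkt i).1) (fun i => (hkkt i).2)

end Portfolio

theorem support_utility_invariant_general {m : ℕ} (n : Fin m → ℕ)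
    (p π : ∀ ℓ, Fin (n ℓ) → ℝ)
    (hp : ∀ ℓ i, 0 < p ℓ i) (hpsum : ∀ ℓ, ∑ i, p ℓ i = 1)
    (hπ : ∀ ℓ i, 0 < π ℓ i)
    (hover : ∀ ℓ, 1 < ∑ i, π ℓ i)
    (U Uder V Vder : ℝ → ℝ)
    (hU : Admissible U Uder) (hV : Admissible V Vder)
    (c : ℝ) (g : ∀ ℓ, Fin (n ℓ) → ℝ)
    (hfeas : Feasible π c g) (hc : 0 < c)
    (hopt : ∀ c₁ : ℝ, ∀ g₁ : ∀ ℓ, Fin (n ℓ) → ℝ, Feasible π c₁ g₁ →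
      ∑ x, prodProb p x * U (wealth c₁ g₁ x) ≤ ∑ x, prodProb p x * U (wealth c g x))
    (c' : ℝ) (g' : ∀ ℓ, Fin (n ℓ) → ℝ)
    (hfeas' : Feasible π c' g') (hc' : 0 < c')
    (hopt' : ∀ c₁ : ℝ, ∀ g₁ : ∀ ℓ, Fin (n ℓ) → ℝ, Feasible π c₁ g₁ →
      ∑ x, prodProb p x * V (wealth c₁ g₁ x) ≤ ∑ x, prodProb p x * V (wealth c' g' x)) :
    ∀ ℓ : Fin m, ∀ i : Fin (n ℓ), 0 < g ℓ i ↔ 0 < g' ℓ i := by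
  intro ℓ i
  have hsupp := (isThresholdSupport_of_optimal hp hpsum hπ hover hU hfeas hc hopt ℓ).unique
    (hπ ℓ) (isThresholdSupport_of_optimal hp hpsum hπ hover hV hfeas' hc' hopt' ℓ)
  simpa using Finset.ext_iff.1 hsupp i

/-- utility-invariance of the optimal support: under strict overround
and pairwise-distinct edge ratios within each event, two optimal portfolios with
positive cash for two admissible utilities have the same active support. -/
theorem support_utility_invariant {m : ℕ} (n : Fin m → ℕ)
    (p π : ∀ ℓ, Fin (n ℓ) → ℝ) (hm : 1 ≤ m)
    (hp : ∀ ℓ i, 0 < p ℓ i) (hpsum : ∀ ℓ, ∑ i, p ℓ i = 1)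
    (hπ : ∀ ℓ i, 0 < π ℓ i)
    (hover : ∀ ℓ, 1 < ∑ i, π ℓ i)
    (hdistinct : ∀ ℓ : Fin m, ∀ i j : Fin (n ℓ), i ≠ j →
      p ℓ i / π ℓ i ≠ p ℓ j / π ℓ j)
    (U Uder V Vder : ℝ → ℝ)
    (hU : Admissible U Uder) (hV : Admissible V Vder)
    (c : ℝ) (g : ∀ ℓ, Fin (n ℓ) → ℝ)
    (hfeas : Feasible π c g) (hc : 0 < c)
    (hopt : ∀ c₁ : ℝ, ∀ g₁ : ∀ ℓ, Fin (n ℓ) → ℝ, Feasible π c₁ g₁ →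
      ∑ x, prodProb p x * U (wealth c₁ g₁ x) ≤ ∑ x, prodProb p x * U (wealth c g x))
    (c' : ℝ) (g' : ∀ ℓ, Fin (n ℓ) → ℝ)
    (hfeas' : Feasible π c' g') (hc' : 0 < c')
    (hopt' : ∀ c₁ : ℝ, ∀ g₁ : ∀ ℓ, Fin (n ℓ) → ℝ, Feasible π c₁ g₁ →
      ∑ x, prodProb p x * V (wealth c₁ g₁ x) ≤ ∑ x, prodProb p x * V (wealth c' g' x)) :
    ∀ ℓ : Fin m, ∀ i : Fin (n ℓ), 0 < g ℓ i ↔ 0 < g' ℓ i :=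
  support_utility_invariant_general n p π hp hpsum hπ hover U Uder V Vder hU hV c g hfeas hc hopt c'
    g' hfeas' hc' hopt'
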